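/- arXiv:2311.15711 — 4 statements merged into one kernel-verified Lean document; each statement's English description precedes it below -/
import Mathlib

section
/- Stable separation transfers to Boolean combinations (finite disjunction/conjunction): let R, R' ⊆ X × Y be relations such that there is no sequence a : Fin n → X, b : Fin n → Y with (for all i < j: R(a i, b j)) and (for all j < i: R'(a i, b j)). Then, for the relations Rᵐ((x₀,…,x_m), y) := ∃ i, R(x_i, y) and R'ᵐ((x₀,…,x_m), y) := ∀ i, R'(x_i, y) on X^{m+1} × Y, there is an N such that no sequence of length N satisfies the analogous alternation pattern. -/
open Finset

lemma pre_hom (c : ℕ) : ∀ t : ℕ, ∃ M : ℕ, ∀ (f : ℕ → ℕ → Fin (c + 1)) (A : Finset ℕ),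
    M ≤ A.card → ∃ s : Fin t → ℕ, (∀ i, s i ∈ A) ∧ StrictMono s ∧
      ∃ col : Fin t → Fin (c + 1), ∀ i j : Fin t, i < j → f (s i) (s j) = col i := by
  intro t
  induction t with
  | zero =>
      exact ⟨0, fun f A _ => ⟨Fin.elim0, fun i => i.elim0, fun i => i.elim0,
        Fin.elim0, fun i => i.elim0⟩⟩
  | succ t ih =>
      obtain ⟨M, hM⟩ := ih
      refine ⟨(c + 1) * M + 1, fun f A hA => ?_⟩
      have hne : A.Nonempty := card_pos.mp (by omega)
      set a := A.min' hne with ha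
      have haA : a ∈ A := A.min'_mem hne
      have hBcard : (c + 1) * M ≤ (A.erase a).card := by
        have := card_erase_of_mem haA
        omega
      obtain ⟨k, -, hk⟩ := exists_le_card_fiber_of_mul_le_card_of_maps_to
        (f := fun x => f a x) (s := A.erase a) (t := (univ : Finset (Fin (c + 1))))
        (fun x _ => mem_univ _) univ_nonempty (by simpa using hBcard)
      obtain ⟨s', hs'mem, hs'mono, col', hcol'⟩ := hM f _ hk
      have hs'B : ∀ i, s' i ∈ A.erase a := fun i => (mem_filter.mp (hs'mem i)).1
      have hs'col : ∀ i, f a (s' i) = k := fun i => (mem_filter.mp (hs'mem i)).2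
      have hlt : ∀ i, a < s' i := fun i =>
        lt_of_le_of_ne (A.min'_le _ (mem_of_mem_erase (hs'B i)))
          (Ne.symm (ne_of_mem_erase (hs'B i)))
      refine ⟨Fin.cons a s', ?_, ?_, Fin.cons k col', ?_⟩
      · intro i
        induction i using Fin.cases with
        | zero => simpa using haA
        | succ i' => simpa using mem_of_mem_erase (hs'B i')
      · intro i j hij
        induction j using Fin.cases with
        | zero => exact absurd hij (by simp)
        | succ j' =>
          induction i using Fin.cases with
          | zero => simpa using hlt j'
          | succ i' =>
            simp only [Fin.cons_succ]
            exact hs'mono (by simpa using hij)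
      · intro i j hij
        induction j using Fin.cases with
        | zero => exact absurd hij (by simp)
        | succ j' =>
          induction i using Fin.cases with
          | zero => simpa using hs'col j'
          | succ i' =>
            simp only [Fin.cons_succ]
            exact hcol' i' j' (by simpa using hij)

lemma ramsey_pairs (c n : ℕ) : ∃ N : ℕ, ∀ f : ℕ → ℕ → Fin (c + 1),
    ∃ g : Fin n → ℕ, StrictMono g ∧ (∀ i, g i < N) ∧
      ∃ k : Fin (c + 1), ∀ i j : Fin n, i < j → f (g i) (g j) = k := by
  obtain ⟨M, hM⟩ := pre_hom c ((c + 1) * n + 1)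
  refine ⟨M, fun f => ?_⟩
  obtain ⟨s, hsA, hsmono, col, hcol⟩ := hM f (Finset.range M) (by simp)
  obtain ⟨k, -, hk⟩ := exists_le_card_fiber_of_mul_le_card_of_maps_to
    (f := col) (n := n) (s := (univ : Finset (Fin ((c + 1) * n + 1))))
    (t := (univ : Finset (Fin (c + 1)))) (fun x _ => mem_univ _) univ_nonempty
    (by simp only [card_univ, Fintype.card_fin]; omega)
  set e := Finset.orderEmbOfCardLe _ hk with he
  refine ⟨fun i => s (e i), hsmono.comp e.strictMono, fun i => ?_, k, fun i j hij => ?_⟩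
  · simpa using hsA (e i)
  · have hm := Finset.orderEmbOfCardLe_mem _ hk i
    rw [hcol _ _ (e.strictMono hij)]
    simpa using (mem_filter.mp hm).2

theorem stmt_8 {X Y : Type*} (R R' : X → Y → Prop) (n : ℕ)
    (h : ¬ ∃ (a : Fin n → X) (b : Fin n → Y),
      (∀ i j : Fin n, i < j → R (a i) (b j)) ∧ (∀ i j : Fin n, j < i → R' (a i) (b j)))
    (m : ℕ) :
    ∃ N : ℕ, ¬ ∃ (a : Fin N → (Fin (m + 1) → X)) (b : Fin N → Y),
      (∀ i j : Fin N, i < j → ∃ k : Fin (m + 1), R (a i k) (b j)) ∧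
      (∀ i j : Fin N, j < i → ∀ k : Fin (m + 1), R' (a i k) (b j)) := by
  obtain ⟨N, hN⟩ := ramsey_pairs m n
  refine ⟨N, ?_⟩
  rintro ⟨a, b, h1, h2⟩
  classical
  let f : ℕ → ℕ → Fin (m + 1) := fun i j =>
    if hi : i < N then
      if hj : j < N then
        if hk : ∃ k : Fin (m + 1), R (a ⟨i, hi⟩ k) (b ⟨j, hj⟩) then hk.choose else 0
      else 0
    else 0
  obtain ⟨g, hgmono, hgN, k, hcol⟩ := hN f
  apply h
  refine ⟨fun i => a ⟨g i, hgN i⟩ k, fun i => b ⟨g i, hgN i⟩, fun i j hij => ?_,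
    fun i j hij => h2 _ _ (by simpa [Fin.lt_def] using hgmono hij) k⟩
  have hlt : (⟨g i, hgN i⟩ : Fin N) < ⟨g j, hgN j⟩ := by
    simpa [Fin.lt_def] using hgmono hij
  have hk : ∃ k : Fin (m + 1), R (a ⟨g i, hgN i⟩ k) (b ⟨g j, hgN j⟩) := h1 _ _ hlt
  have hfeq : f (g i) (g j) = hk.choose := by
    simp only [f, dif_pos (hgN i), dif_pos (hgN j), dif_pos hk]
  have := hk.choose_spec
  rwa [← hfeq, hcol i j hij] at this
end

section
/- Half-honest separation from finite separation (Lemma on stably separated relations): Let X, Y be sets, R, R' ⊆ X × Y stably separated with bound m (no sequence (a_i,b_i)_{i≤m} with R(a_i,b_j) for i<j and R'(a_i,b_j) for j<i). Let D, D' ⊆ Y be such that for every finite B ⊆ Y there exists a ∈ X with B ∩ D ⊆ {y : R(a,y)} and B ∩ D' ⊆ {y : R'(a,y)}. Then for every finite B ⊆ Y there exist a₀,…,a_m ∈ X such that (B ∩ D) ⊆ {y : R(a_i, y)} for each i, (B ∩ D') ⊆ {y : R'(a_i, y)} for each i, and D ∩ ⋂_{i≤m} {y : R'(a_i, y)} =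 ∅. -/
theorem stmt_9 {X Y : Type*} (R R' : X → Y → Prop) (m : ℕ)
    (hstable : ¬ ∃ (a : Fin (m + 1) → X) (b : Fin (m + 1) → Y),
      (∀ i j : Fin (m + 1), i < j → R (a i) (b j)) ∧
      (∀ i j : Fin (m + 1), j < i → R' (a i) (b j)))
    (D D' : Set Y)
    (hfin : ∀ B : Finset Y, ∃ a : X,
      (∀ y ∈ B, y ∈ D → R a y) ∧ (∀ y ∈ B, y ∈ D' → R' a y)) :
    ∀ B : Finset Y, ∃ a : Fin (m + 1) → X,
      (∀ i : Fin (m + 1), ∀ y ∈ B, y ∈ D → R (a i) y) ∧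
      (∀ i : Fin (m + 1), ∀ y ∈ B, y ∈ D' → R' (a i) y) ∧
      (∀ y ∈ D, ∃ i : Fin (m + 1), ¬ R' (a i) y) := by
  classical
  intro B
  by_contra hcon
  push_neg at hcon
  -- hcon : ∀ a, cond1 → cond2 → ∃ y ∈ D, ∀ i, R' (a i) y
  have key : ∀ k, k ≤ m + 1 → ∃ (a : Fin k → X) (b : Fin k → Y),
      (∀ i, ∀ y ∈ B, y ∈ D → R (a i) y) ∧
      (∀ i, ∀ y ∈ B, y ∈ D' → R' (a i) y) ∧
      (∀ j, b j ∈ D) ∧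
      (∀ i j, j < i → R (a i) (b j)) ∧
      (∀ i j, i ≤ j → R' (a i) (b j)) := by
    intro k
    induction k with
    | zero =>
      intro _
      exact ⟨Fin.elim0, Fin.elim0, fun i => i.elim0, fun i => i.elim0,
        fun i => i.elim0, fun i => i.elim0, fun i => i.elim0⟩
    | succ k ih =>
      intro hk
      obtain ⟨a, b, h1, h2, h3, h4, h5⟩ := ih (Nat.le_of_succ_le hk)
      have hkm : k ≤ m := Nat.lt_succ_iff.mp hk
      obtain ⟨x, hx1, hx2⟩ := hfin (B ∪ Finset.image b Finset.univ)
      set a' : Fin (k + 1) → X := fun i => if h : i.val < k then a ⟨i, h⟩ else x with ha'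
      have ha1 : ∀ i, ∀ y ∈ B, y ∈ D → R (a' i) y := by
        intro i y hy hyD
        by_cases h : i.val < k <;> simp only [ha', h, dif_pos, dif_neg, not_false_iff]
        · exact h1 ⟨i, h⟩ y hy hyD
        · exact hx1 y (Finset.mem_union_left _ hy) hyD
      have ha2 : ∀ i, ∀ y ∈ B, y ∈ D' → R' (a' i) y := by
        intro i y hy hyD
        by_cases h : i.val < k <;> simp only [ha', h, dif_pos, dif_neg, not_false_iff]
        · exact h2 ⟨i, h⟩ y hy hyD
        · exact hx2 y (Finset.mem_union_left _ hy) hyD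
      -- build the padded tuple
      set t : Fin (m + 1) → X := fun i => a' ⟨min i.val k, by omega⟩ with ht
      obtain ⟨y, hyD, hy⟩ := hcon t
        (fun i z hz hzD => ha1 _ z hz hzD) (fun i z hz hzD => ha2 _ z hz hzD)
      have hy' : ∀ i : Fin (k + 1), R' (a' i) y := by
        intro i
        have hi : i.val ≤ m := by omega
        have := hy ⟨i.val, by omega⟩
        simpa [ht, Nat.min_eq_left (by omega : i.val ≤ k), Fin.eta] using this
      set b' : Fin (k + 1) → Y := fun j => if h : j.val < k then b ⟨j, h⟩ else y with hb'
      refine ⟨a', b', ha1, ha2, ?_, ?_, ?_⟩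
      · intro j
        by_cases h : j.val < k <;> simp only [hb', dif_pos, dif_neg, h, not_false_iff]
        · exact h3 ⟨j, h⟩
        · exact hyD
      · intro i j hij
        have hj : j.val < k := by
          have : j.val < i.val := hij
          have : i.val < k + 1 := i.isLt
          omega
        by_cases h : i.val < k
        · have : R (a ⟨i, h⟩) (b ⟨j, hj⟩) := h4 ⟨i, h⟩ ⟨j, hj⟩ hij
          simpa [ha', hb', h, hj] using this
        · have hb : b ⟨j, hj⟩ ∈ B ∪ Finset.image b Finset.univ :=
            Finset.mem_union_right _ (Finset.mem_image_of_mem b (Finset.mem_univ _))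
          have : R x (b ⟨j, hj⟩) := hx1 _ hb (h3 _)
          simpa [ha', hb', h, hj] using this
      · intro i j hij
        by_cases hj : j.val < k
        · have hi : i.val < k := by
            have : i.val ≤ j.val := hij
            omega
          have : R' (a ⟨i, hi⟩) (b ⟨j, hj⟩) := h5 ⟨i, hi⟩ ⟨j, hj⟩ hij
          simpa [ha', hb', hi, hj] using this
        · have := hy' i
          simpa [hb', hj] using this
  obtain ⟨a, b, h1, h2, h3, h4, h5⟩ := key (m + 1) le_rfl
  exact hstable ⟨fun i => a i.rev, fun i => b i.rev,
    fun i j hij => h4 i.rev j.rev (by simpa using Fin.rev_lt_rev.mpr hij),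
    fun i j hij => h5 i.rev j.rev (le_of_lt (by simpa using Fin.rev_lt_rev.mpr hij))⟩
end

section
/- Honest separation (second stability lemma): Let X, Y be sets, R, R' ⊆ X × Y stably separated with bound m. Let D, D' ⊆ Y be half-honestly finitely separated: for every finite B ⊆ Y there exists a ∈ X with B ∩ D ⊆ {y : R(a,y)}, B ∩ D' ⊆ {y : R'(a,y)}, and D ∩ {y : R'(a,y)} = ∅. Then for every finite B ⊆ Y there exist a₀,…,a_m ∈ X such that for each i: B ∩ D ⊆ {y : R(a_i,y)}, B ∩ D' ⊆ {y : R'(a_i,y)}, D ∩ {y : R'(a_i,y)} = ∅, and additionally D' ∩ ⋂_{i≤m} {y : R(a_i,y)} = ∅. -/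
/-!
Suppose that for some finite `B` no good tuple exists. Pick, for every finite `S`, a witness
`A S` of half-honest separation for `B ∪ S`. Any tuple `i ↦ A (S i)` satisfies the first three
requirements, so it must fail the last one: some `y ∈ D'` satisfies `R (A (S i)) y` for all `i`.
Feeding back the points found so far, i.e. taking `a i := A {b₀, …, b_{i-1}}` and letting `bⱼ` be
the point produced for the tuple `i ↦ A {b₀, …, b_{min i j - 1}}`, yields `R (a i) (b j)` for
`i < j` and, since `bⱼ ∈ D'` lies in the set defining `a i`, `R' (a i) (b j)` for `j < i`: a
ladder of length `m + 1`, contradicting stability.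
-/

theorem exists_seq_eq_apply_map_range {Y : Type*} (f : List Y → Y) :
    ∃ b : ℕ → Y, ∀ n, b n = f ((List.range n).map b) := by
  let history : ℕ → List Y := fun n => Nat.rec [] (fun _ l => l ++ [f l]) n
  refine ⟨fun n => f (history n), fun n => congrArg f ?_⟩
  induction n with
  | zero => rfl
  | succ n ih =>
    change history n ++ [f (history n)] = _
    rw [List.range_succ, List.map_append, ← ih]
    rfl

theorem exists_ladder_of_forall_exists_common {X Y : Type*} (R R' : X → Y → Prop) (m : ℕ)
    (D' : Set Y) (A : Finset Y → X) (hR' : ∀ S : Finset Y, ∀ y ∈ S, y ∈ D' → R' (A S) y)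
    (hcommon : ∀ S : Fin (m + 1) → Finset Y, ∃ y ∈ D', ∀ i, R (A (S i)) y) :
    ∃ (a : Fin (m + 1) → X) (b : Fin (m + 1) → Y),
      (∀ i j : Fin (m + 1), i < j → R (a i) (b j)) ∧
      (∀ i j : Fin (m + 1), j < i → R' (a i) (b j)) := by
  classical
  choose next hnext_mem hnext_R using hcommon
  obtain ⟨b, hb⟩ := exists_seq_eq_apply_map_range
    fun l : List Y => next fun i => (l.take i).toFinset
  have hb_mem (j : ℕ) : b j ∈ D' := by rw [hb]; exact hnext_mem _
  refine ⟨fun i => A ((List.range i).map b).toFinset, fun j => b j, ?_, ?_⟩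
  · intro i j hij
    have h := hnext_R (fun i => (((List.range j).map b).take i).toFinset) i
    rwa [← hb, ← List.map_take, List.take_range, min_eq_left (Fin.le_iff_val_le_val.mp hij.le)] at h
  · intro i j hji
    exact hR' _ _ (by simpa using ⟨j, hji, rfl⟩) (hb_mem j)

theorem stmt_10 {X Y : Type*} (R R' : X → Y → Prop) (m : ℕ)
    (hstable : ¬ ∃ (a : Fin (m + 1) → X) (b : Fin (m + 1) → Y),
      (∀ i j : Fin (m + 1), i < j → R (a i) (b j)) ∧
      (∀ i j : Fin (m + 1), j < i → R' (a i) (b j)))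
    (D D' : Set Y)
    (hhalf : ∀ B : Finset Y, ∃ a : X,
      (∀ y ∈ B, y ∈ D → R a y) ∧ (∀ y ∈ B, y ∈ D' → R' a y) ∧
      (∀ y ∈ D, ¬ R' a y)) :
    ∀ B : Finset Y, ∃ a : Fin (m + 1) → X,
      (∀ i : Fin (m + 1), ∀ y ∈ B, y ∈ D → R (a i) y) ∧
      (∀ i : Fin (m + 1), ∀ y ∈ B, y ∈ D' → R' (a i) y) ∧
      (∀ i : Fin (m + 1), ∀ y ∈ D, ¬ R' (a i) y) ∧
      (∀ y ∈ D', ∃ i : Fin (m + 1), ¬ R (a i) y) := by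
  classical
  intro B
  by_contra hno_tuple
  push Not at hno_tuple
  choose A hA_D hA_D' hA_honest using fun S : Finset Y => hhalf (B ∪ S)
  refine hstable (exists_ladder_of_forall_exists_common R R' m D' A
    (fun S y hy => hA_D' S y (Finset.mem_union_right B hy)) fun S => ?_)
  exact hno_tuple (fun i => A (S i))
    (fun i y hy => hA_D (S i) y (Finset.mem_union_left _ hy))
    (fun i y hy => hA_D' (S i) y (Finset.mem_union_left _ hy))
    (fun i => hA_honest (S i))
end

section
/- Double-limit characterization of stability (one direction): Let S be a compact Hausdorff (hence regular) metrizable space and f : X × Y → S a function. Suppose that for every pair of disjoint compact sets C, C' ⊆ S, the relations {(x,y) : f(x,y) ∈ C} and {(x,y) : f(x,y) ∈ C'} are stably separated. Then for every sequence (a_i)_{i<ω} in X and (b_j)_{j<ω} in Y, if both iterated limits lim_i lim_j f(a_i, b_j) and lim_j lim_i f(a_i, b_j) exist, they are equal. -/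
open Filter Topology

theorem stmt_12 {X Y S : Type*} [TopologicalSpace S] [CompactSpace S] [T2Space S]
    [TopologicalSpace.MetrizableSpace S]
    (f : X → Y → S)
    (hstable : ∀ C C' : Set S, IsCompact C → IsCompact C' → Disjoint C C' →
      ∃ n : ℕ, ¬ ∃ (a : Fin n → X) (b : Fin n → Y),
        (∀ i j : Fin n, i < j → f (a i) (b j) ∈ C) ∧
        (∀ i j : Fin n, j < i → f (a i) (b j) ∈ C'))
    (a : ℕ → X) (b : ℕ → Y) (u : ℕ → S) (v : ℕ → S) (L L' : S)
    (hu : ∀ i, Tendsto (fun j => f (a i) (b j)) atTop (𝓝 (u i)))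
    (hv : ∀ j, Tendsto (fun i => f (a i) (b j)) atTop (𝓝 (v j)))
    (hL : Tendsto u atTop (𝓝 L)) (hL' : Tendsto v atTop (𝓝 L')) :
    L = L' := by
  letI := TopologicalSpace.metrizableSpaceMetric S
  by_contra hne
  have hd : 0 < dist L L' := dist_pos.2 hne
  set ε : ℝ := dist L L' / 3 with hεdef
  have hε0 : 0 < ε := by positivity
  set C := Metric.closedBall L ε with hC
  set C' := Metric.closedBall L' ε with hC'
  have hCc : IsCompact C := Metric.isClosed_closedBall.isCompact
  have hCc' : IsCompact C' := Metric.isClosed_closedBall.isCompact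
  have hdisj : Disjoint C C' := by
    rw [Set.disjoint_left]
    intro z hz hz'
    have h1 : dist z L ≤ ε := hz
    have h2 : dist z L' ≤ ε := hz'
    have := dist_triangle L z L'
    rw [dist_comm L z] at this
    rw [hεdef] at h1 h2
    linarith
  obtain ⟨n, hn⟩ := hstable C C' hCc hCc' hdisj
  apply hn
  have hP : ∀ᶠ i in atTop, dist (u i) L < ε / 2 := by
    have := hL (Metric.ball_mem_nhds L (by positivity : (0:ℝ) < ε / 2))
    simpa [Metric.mem_ball] using this
  have hQ : ∀ᶠ j in atTop, dist (v j) L' < ε / 2 := by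
    have := hL' (Metric.ball_mem_nhds L' (by positivity : (0:ℝ) < ε / 2))
    simpa [Metric.mem_ball] using this
  have hCmem : ∀ i, dist (u i) L < ε / 2 → ∀ᶠ j in atTop, f (a i) (b j) ∈ C := by
    intro i hi
    have h := (hu i) (Metric.ball_mem_nhds (u i) (by positivity : (0:ℝ) < ε / 2))
    rw [eventually_iff_exists_mem]
    refine ⟨_, h, fun j hj => ?_⟩
    have hj' : dist (f (a i) (b j)) (u i) < ε / 2 := hj
    have := dist_triangle (f (a i) (b j)) (u i) L
    simp only [hC, Metric.mem_closedBall]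
    linarith
  have hC'mem : ∀ j, dist (v j) L' < ε / 2 → ∀ᶠ i in atTop, f (a i) (b j) ∈ C' := by
    intro j hj
    have h := (hv j) (Metric.ball_mem_nhds (v j) (by positivity : (0:ℝ) < ε / 2))
    rw [eventually_iff_exists_mem]
    refine ⟨_, h, fun i hi => ?_⟩
    have hi' : dist (f (a i) (b j)) (v j) < ε / 2 := hi
    have := dist_triangle (f (a i) (b j)) (v j) L'
    simp only [hC', Metric.mem_closedBall]
    linarith
  have key : ∀ m : ℕ, ∃ (p q : Fin m → ℕ),
      (∀ k, dist (u (p k)) L < ε / 2) ∧ (∀ k, dist (v (q k)) L' < ε / 2) ∧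
      (∀ k l, k ≤ l → f (a (p k)) (b (q l)) ∈ C) ∧
      (∀ k l, l < k → f (a (p k)) (b (q l)) ∈ C') := by
    intro m
    induction m with
    | zero => exact ⟨Fin.elim0, Fin.elim0, fun k => k.elim0, fun k => k.elim0,
        fun k => k.elim0, fun k => k.elim0⟩
    | succ m ih =>
      obtain ⟨p, q, h1, h2, h3, h4⟩ := ih
      have hnewp : ∀ᶠ i in atTop,
          dist (u i) L < ε / 2 ∧ ∀ l : Fin m, f (a i) (b (q l)) ∈ C' :=
        hP.and (eventually_all.2 fun l => hC'mem (q l) (h2 l))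
      obtain ⟨i0, hi0⟩ := hnewp.exists
      set p' : Fin (m + 1) → ℕ := Fin.snoc p i0 with hp'def
      have hp'P : ∀ k, dist (u (p' k)) L < ε / 2 := by
        refine Fin.lastCases ?_ ?_
        · simpa [hp'def] using hi0.1
        · intro k; simpa [hp'def] using h1 k
      have hnewq : ∀ᶠ j in atTop,
          dist (v j) L' < ε / 2 ∧ ∀ k : Fin (m + 1), f (a (p' k)) (b j) ∈ C :=
        hQ.and (eventually_all.2 fun k => hCmem (p' k) (hp'P k))
      obtain ⟨j0, hj0⟩ := hnewq.exists
      set q' : Fin (m + 1) → ℕ := Fin.snoc q j0 with hq'def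
      refine ⟨p', q', hp'P, ?_, ?_, ?_⟩
      · refine Fin.lastCases ?_ ?_
        · simpa [hq'def] using hj0.1
        · intro k; simpa [hq'def] using h2 k
      · intro k l hkl
        refine Fin.lastCases ?_ ?_ l hkl
        · intro _
          simpa [hq'def] using hj0.2 k
        · intro l' hkl'
          have hk : (k : ℕ) < m := lt_of_le_of_lt (Fin.le_def.1 hkl') (by
            simpa using l'.isLt)
          have : k = Fin.castSucc ⟨k, hk⟩ := by ext; simp
          rw [this]
          simp only [hp'def, hq'def, Fin.snoc_castSucc]
          exact h3 _ _ (by simpa [Fin.le_def] using Fin.le_def.1 hkl')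
      · intro k l hlk
        refine Fin.lastCases ?_ ?_ k hlk
        · intro hlk'
          have hl : (l : ℕ) < m := by simpa [Fin.lt_def] using hlk'
          have : l = Fin.castSucc ⟨l, hl⟩ := by ext; simp
          rw [this]
          simp only [hp'def, hq'def, Fin.snoc_last, Fin.snoc_castSucc]
          exact hi0.2 _
        · intro k' hlk'
          have hl : (l : ℕ) < m := lt_of_lt_of_le (Fin.lt_def.1 hlk') (by
            simpa using Nat.lt_succ_iff.1 (Fin.castSucc k').isLt)
          have : l = Fin.castSucc ⟨l, hl⟩ := by ext; simp
          rw [this]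
          simp only [hp'def, hq'def, Fin.snoc_castSucc]
          exact h4 _ _ (by simpa [Fin.lt_def] using Fin.lt_def.1 hlk')
  obtain ⟨p, q, _, _, h3, h4⟩ := key n
  exact ⟨a ∘ p, b ∘ q, fun i j hij => h3 i j hij.le, fun i j hji => h4 i j hji⟩
end
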